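/- arXiv:2102.02037 — 2 statements merged into one kernel-verified Lean document; each statement's English description precedes it below -/
import Mathlib

section
/- Let E be a separable real Hilbert space with dim E ≥ 2. For a measure μ ∈ W_1(E) the following are equivalent: (i) μ is a Dirac measure; (ii) for every ν ∈ W_1(E) with ν ≠ μ there exists η ∈ W_1(E) such that d_{W_1}(μ,ν) = d_{W_1}(ν,η) = (1/2)·d_{W_1}(μ,η). -/
open MeasureTheory ENNReal Topology Filter
open scoped RealInnerProductSpace

noncomputable section

/-- The `p`-Wasserstein "distance" (valued in `ℝ≥0∞`) between two Borel measures on a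
metric space: `(inf over couplings π of ∫ ρ(x,y)^p dπ)^(min (1/p) 1)`. -/
noncomputable def wassersteinDist {X : Type*} [MeasurableSpace X] [PseudoEMetricSpace X]
    (p : ℝ) (μ ν : Measure X) : ℝ≥0∞ :=
  (⨅ π ∈ {π : Measure (X × X) | π.map Prod.fst = μ ∧ π.map Prod.snd = ν},
    ∫⁻ z, edist z.1 z.2 ^ p ∂π) ^ min p⁻¹ 1

/-- Membership in the `p`-Wasserstein space: a Borel probability measure with a finite
`p`-th moment. -/
def MemWp {X : Type*} [MeasurableSpace X] [PseudoEMetricSpace X] (p : ℝ) (μ : Measure X) : Prop :=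
  IsProbabilityMeasure μ ∧ ∃ x₀ : X, ∫⁻ x, edist x x₀ ^ p ∂μ ≠ ⊤

/-!
If `μ = δ_x`, push `ν` forward by the homothety `a ↦ 2a - x`. The image `η` has twice the first
moment of `ν` about `x`; the coupling `(a, 2a - x)` and the triangle inequality for `W₁` give
`W₁(ν, η) = W₁(δ_x, ν)`.

Conversely, test the hypothesis on `ν = δ_y`. Then `W₁(μ, η) = W₁(μ, δ_y) + W₁(δ_y, η)`, so the
product coupling of `μ` and `η` is optimal and `‖a - c‖ ≤ ‖a - y‖ + ‖y - c‖` is an equality for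
`μ ⊗ η`-almost every `(a, c)`. If `μ` is not `δ_y`, then neither is `η`, and strict convexity puts
`μ` on a line through `y`. Doing this for a second point `y` off that line (here `dim E ≥ 2`
enters), `μ` is carried by the intersection of two distinct lines, which is at most one point.
-/

section Wasserstein

variable {X : Type*} [MeasurableSpace X] {μ : Measure X}

theorem eq_dirac_of_ae_eq [IsProbabilityMeasure μ] {x : X} (h : ∀ᵐ a ∂μ, a = x) :
    μ = Measure.dirac x :=
  calc μ = μ.map id := Measure.map_id.symm
    _ = μ.map (fun _ => x) := Measure.map_congr h
    _ = Measure.dirac x := by rw [Measure.map_const, measure_univ, one_smul]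

theorem exists_eq_dirac_of_ae_mem [IsProbabilityMeasure μ] {s : Set X} (h : ∀ᵐ a ∂μ, a ∈ s)
    (hs : s.Subsingleton) : ∃ x, μ = Measure.dirac x := by
  obtain ⟨x, hx⟩ := h.exists
  exact ⟨x, eq_dirac_of_ae_eq (h.mono fun a ha => hs ha hx)⟩

def couplings (μ ν : Measure X) : Set (Measure (X × X)) :=
  {π | π.map Prod.fst = μ ∧ π.map Prod.snd = ν}

theorem map_swap_mem_couplings {μ ν : Measure X} {π : Measure (X × X)}
    (hπ : π ∈ couplings μ ν) : π.map Prod.swap ∈ couplings ν μ := by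
  constructor
  · rw [Measure.map_map measurable_fst measurable_swap]
    exact hπ.2
  · rw [Measure.map_map measurable_snd measurable_swap]
    exact hπ.1

theorem map_prodMk_mem_couplings {Ω : Type*} [MeasurableSpace Ω] {ρ : Measure Ω} {f g : Ω → X}
    (hf : Measurable f) (hg : Measurable g) :
    ρ.map (fun ω => (f ω, g ω)) ∈ couplings (ρ.map f) (ρ.map g) := by
  constructor
  · rw [Measure.map_map measurable_fst (hf.prodMk hg)]; rfl
  · rw [Measure.map_map measurable_snd (hf.prodMk hg)]; rfl

variable [PseudoEMetricSpace X] {ν : Measure X}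

theorem wassersteinDist_one_eq (μ ν : Measure X) :
    wassersteinDist 1 μ ν = ⨅ π ∈ couplings μ ν, ∫⁻ z, edist z.1 z.2 ∂π := by
  simp only [wassersteinDist, couplings, inv_one, min_self, ENNReal.rpow_one]

theorem wassersteinDist_one_le {π : Measure (X × X)} (hπ : π ∈ couplings μ ν) :
    wassersteinDist 1 μ ν ≤ ∫⁻ z, edist z.1 z.2 ∂π :=
  (wassersteinDist_one_eq μ ν).trans_le (iInf₂_le π hπ)

theorem le_wassersteinDist_one {c : ℝ≥0∞}
    (h : ∀ π ∈ couplings μ ν, c ≤ ∫⁻ z, edist z.1 z.2 ∂π) : c ≤ wassersteinDist 1 μ ν :=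
  (le_iInf₂ h).trans_eq (wassersteinDist_one_eq μ ν).symm

theorem wassersteinDist_comm (p : ℝ) (μ ν : Measure X) :
    wassersteinDist p μ ν = wassersteinDist p ν μ := by
  suffices h : ∀ μ ν : Measure X, (⨅ π ∈ couplings μ ν, ∫⁻ z, edist z.1 z.2 ^ p ∂π) ≤
      ⨅ π ∈ couplings ν μ, ∫⁻ z, edist z.1 z.2 ^ p ∂π by
    simp only [wassersteinDist]
    exact congrArg (· ^ min p⁻¹ 1) ((h μ ν).antisymm (h ν μ))
  intro μ ν
  refine le_iInf₂ fun π hπ => (iInf₂_le _ (map_swap_mem_couplings hπ)).trans_eq ?_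
  refine (lintegral_map_equiv _ MeasurableEquiv.prodComm).trans (lintegral_congr fun z => ?_)
  exact congrArg (· ^ p) (edist_comm z.2 z.1)

theorem wassersteinDist_one_map_le {Ω : Type*} [MeasurableSpace Ω] {ρ : Measure Ω} {f g : Ω → X}
    (hf : Measurable f) (hg : Measurable g) :
    wassersteinDist 1 (ρ.map f) (ρ.map g) ≤ ∫⁻ ω, edist (f ω) (g ω) ∂ρ :=
  (wassersteinDist_one_le (map_prodMk_mem_couplings hf hg)).trans (lintegral_map_le _ _)

theorem memWp_one_iff :
    MemWp 1 μ ↔ IsProbabilityMeasure μ ∧ ∃ x₀ : X, ∫⁻ x, edist x x₀ ∂μ ≠ ⊤ := by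
  simp only [MemWp, ENNReal.rpow_one]

variable [OpensMeasurableSpace X]

theorem memWp_dirac {p : ℝ} (hp : 0 ≤ p) (x : X) : MemWp p (Measure.dirac x) := by
  refine ⟨inferInstance, x, ?_⟩
  rw [lintegral_dirac' _ (measurable_edist_left.pow_const p)]
  exact ENNReal.rpow_ne_top_of_nonneg hp (by simp)

theorem lintegral_edist_le_add_wassersteinDist_one (x : X) :
    ∫⁻ b, edist b x ∂ν ≤ ∫⁻ a, edist a x ∂μ + wassersteinDist 1 μ ν := by
  refine tsub_le_iff_left.1 (le_wassersteinDist_one fun π hπ => tsub_le_iff_left.2 ?_)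
  calc ∫⁻ b, edist b x ∂ν = ∫⁻ z, edist z.2 x ∂π := by
        rw [← hπ.2, lintegral_map measurable_edist_left measurable_snd]
    _ ≤ ∫⁻ z, edist z.1 x + edist z.1 z.2 ∂π :=
        lintegral_mono fun z => (edist_triangle_left _ _ _).trans_eq (add_comm _ _)
    _ = ∫⁻ a, edist a x ∂μ + ∫⁻ z, edist z.1 z.2 ∂π := by
        rw [lintegral_add_left (f := fun z : X × X => edist z.1 x)
          (measurable_edist_left.comp measurable_fst), ← hπ.1,
          lintegral_map measurable_edist_left measurable_fst]

theorem wassersteinDist_one_dirac_left [IsProbabilityMeasure μ] (x : X) :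
    wassersteinDist 1 (Measure.dirac x) μ = ∫⁻ a, edist a x ∂μ := by
  refine le_antisymm ?_ ?_
  · have h := wassersteinDist_one_map_le (ρ := μ) measurable_const measurable_id (f := fun _ => x)
    rw [Measure.map_const, measure_univ, one_smul, Measure.map_id] at h
    exact h.trans_eq (lintegral_congr fun a => edist_comm x a)
  · simpa [lintegral_dirac' _ measurable_edist_left] using
      lintegral_edist_le_add_wassersteinDist_one (μ := Measure.dirac x) (ν := μ) x

end Wasserstein

theorem MemWp.lintegral_edist_ne_top {X : Type*} [MeasurableSpace X] [PseudoMetricSpace X]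
    {μ : Measure X} (hμ : MemWp 1 μ) (x : X) : ∫⁻ a, edist a x ∂μ ≠ ⊤ := by
  obtain ⟨hprob, x₀, hx₀⟩ := memWp_one_iff.1 hμ
  refine ne_top_of_le_ne_top ?_ (lintegral_mono fun a => edist_triangle a x₀ x)
  rw [lintegral_add_right _ measurable_const, lintegral_const, measure_univ, mul_one]
  exact ENNReal.add_ne_top.2 ⟨hx₀, edist_ne_top x₀ x⟩

section Lines

variable {k V P : Type*} [DivisionRing k] [AddCommGroup V] [Module k V] [AddTorsor V P]

theorem exists_notMem_affineSpan_pair (hV : 2 ≤ Module.rank k V) (p₁ p₂ : P) :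
    ∃ p, p ∉ line[k, p₁, p₂] := by
  by_contra! h
  have htop : line[k, p₁, p₂] = ⊤ := eq_top_iff.2 fun p _ => h p
  have hcol := collinear_pair k p₁ p₂
  rw [Collinear, ← direction_affineSpan, htop, AffineSubspace.direction_top, rank_top] at hcol
  exact absurd (hV.trans hcol) (by norm_num)

theorem inter_affineSpan_pair_subsingleton {p₁ p₂ p₃ p₄ : P} (h : p₃ ∉ line[k, p₁, p₂]) :
    ((line[k, p₁, p₂] : Set P) ∩ line[k, p₃, p₄]).Subsingleton := by
  rintro a ⟨ha₁, ha₂⟩ b ⟨hb₁, hb₂⟩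
  by_contra hab
  apply h
  rw [← affineSpan_pair_eq_of_mem_of_mem_of_ne ha₁ hb₁ hab,
    affineSpan_pair_eq_of_mem_of_mem_of_ne ha₂ hb₂ hab]
  exact left_mem_affineSpan_pair k p₃ p₄

end Lines

theorem mem_affineSpan_pair_of_edist_eq_add {V P : Type*} [NormedAddCommGroup V]
    [NormedSpace ℝ V] [StrictConvexSpace ℝ V] [MetricSpace P] [NormedAddTorsor V P] {a b c : P}
    (hbc : b ≠ c) (h : edist c a = edist c b + edist b a) : a ∈ line[ℝ, b, c] := by
  have hw : Wbtw ℝ c b a := by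
    rw [← dist_add_dist_eq_iff]
    rw [edist_dist, edist_dist, edist_dist, ← ENNReal.ofReal_add dist_nonneg dist_nonneg,
      ENNReal.ofReal_eq_ofReal_iff dist_nonneg (add_nonneg dist_nonneg dist_nonneg)] at h
    exact h.symm
  exact hw.collinear.mem_affineSpan_of_mem_of_ne (by simp) (by simp) (by simp) hbc

theorem ae_ae_edist_eq_add_of_le_wassersteinDist_one {X : Type*} [MeasurableSpace X]
    [PseudoEMetricSpace X] [OpensMeasurableSpace X] {μ ν : Measure X} [IsProbabilityMeasure μ]
    [IsProbabilityMeasure ν] (y : X) (hfin : ∫⁻ a, edist a y ∂μ + ∫⁻ b, edist b y ∂ν ≠ ⊤)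
    (hle : ∫⁻ a, edist a y ∂μ + ∫⁻ b, edist b y ∂ν ≤ wassersteinDist 1 μ ν) :
    ∀ᵐ a ∂μ, ∀ᵐ b ∂ν, edist a b = edist a y + edist y b := by
  have hπ : μ.prod ν ∈ couplings μ ν := ⟨Measure.fst_prod, Measure.snd_prod⟩
  have hy₁ : Measurable fun z : X × X => edist z.1 y := measurable_edist_left.comp measurable_fst
  have hy₂ : Measurable fun z : X × X => edist y z.2 := measurable_edist_right.comp measurable_snd
  have hμ : ∫⁻ a, edist a y ∂μ = ∫⁻ z, edist z.1 y ∂μ.prod ν := by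
    conv_lhs => rw [← hπ.1]
    exact lintegral_map measurable_edist_left measurable_fst
  have hν : ∫⁻ b, edist b y ∂ν = ∫⁻ z, edist y z.2 ∂μ.prod ν := by
    conv_lhs => rw [← hπ.2]
    simp_rw [edist_comm y]
    exact lintegral_map measurable_edist_left measurable_snd
  have hsum : ∫⁻ z, edist z.1 y + edist y z.2 ∂μ.prod ν =
      ∫⁻ a, edist a y ∂μ + ∫⁻ b, edist b y ∂ν := by
    rw [lintegral_add_left hy₁, hμ, hν]
  refine Measure.ae_ae_of_ae_prod (ae_eq_of_ae_le_of_lintegral_le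
    (ae_of_all _ fun z => edist_triangle _ _ _) ?_ (hy₁.add hy₂).aemeasurable ?_)
  · exact ne_top_of_le_ne_top (hsum ▸ hfin) (lintegral_mono fun z => edist_triangle _ _ _)
  · exact hsum ▸ hle.trans (wassersteinDist_one_le hπ)

theorem exists_ne_ae_edist_eq_add_of_wassersteinDist_dirac {X : Type*} [MeasurableSpace X]
    [MetricSpace X] [OpensMeasurableSpace X] {μ η : Measure X} (hμ : MemWp 1 μ)
    [IsProbabilityMeasure η] {y : X} (hμy : μ ≠ Measure.dirac y)
    (h₁ : wassersteinDist 1 μ (Measure.dirac y) = wassersteinDist 1 (Measure.dirac y) η)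
    (h₂ : wassersteinDist 1 (Measure.dirac y) η = wassersteinDist 1 μ η / 2) :
    ∃ c ≠ y, ∀ᵐ a ∂μ, edist c a = edist c y + edist y a := by
  have := hμ.1
  set D := ∫⁻ a, edist a y ∂μ
  have hD : D ≠ ⊤ := hμ.lintegral_edist_ne_top y
  have hηD : ∫⁻ c, edist c y ∂η = D := by
    rw [← wassersteinDist_one_dirac_left, ← h₁, wassersteinDist_comm,
      wassersteinDist_one_dirac_left]
  have hημ : wassersteinDist 1 η μ = D + D := by
    rw [wassersteinDist_comm, ← ENNReal.div_mul_cancel (b := wassersteinDist 1 μ η) two_ne_zero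
      ofNat_ne_top, ← h₂, wassersteinDist_one_dirac_left, hηD, mul_two]
  have hae := ae_ae_edist_eq_add_of_le_wassersteinDist_one (μ := η) (ν := μ) y
    (by rw [hηD]; exact add_ne_top.2 ⟨hD, hD⟩) (by rw [hηD, hημ])
  obtain ⟨c, hc, hcy⟩ : ∃ c, (∀ᵐ a ∂μ, edist c a = edist c y + edist y a) ∧ c ≠ y := by
    by_contra! hcy
    have hη : η = Measure.dirac y := eq_dirac_of_ae_eq (hae.mono hcy)
    have hD0 : D = 0 := by rw [← hηD, hη, lintegral_dirac' _ measurable_edist_left, edist_self]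
    refine hμy (eq_dirac_of_ae_eq ?_)
    filter_upwards [(lintegral_eq_zero_iff measurable_edist_left).1 hD0] with a ha
    exact edist_eq_zero.1 ha
  exact ⟨c, hcy, hc⟩

section NormedSpace

variable {E : Type*} [NormedAddCommGroup E] [NormedSpace ℝ E] [MeasurableSpace E] [BorelSpace E]

theorem exists_wassersteinDist_one_reflection_dirac (x : E) {ν : Measure E} (hν : MemWp 1 ν) :
    ∃ η : Measure E, MemWp 1 η ∧
      wassersteinDist 1 (Measure.dirac x) ν = wassersteinDist 1 ν η ∧
      wassersteinDist 1 ν η = wassersteinDist 1 (Measure.dirac x) η / 2 := by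
  have := hν.1
  set T := AffineMap.homothety x (2 : ℝ)
  have hT : Measurable T := (AffineMap.homothety_continuous x 2).measurable
  have hT_center : ∀ a, edist (T a) x = 2 * edist a x := fun a => by
    rw [edist_dist, dist_homothety_center, edist_dist, dist_comm x,
      ENNReal.ofReal_mul (norm_nonneg _)]
    norm_num
  have hT_self : ∀ a, edist a (T a) = edist a x := fun a => by
    rw [edist_comm, edist_dist, dist_homothety_self, edist_dist, dist_comm x]
    norm_num
  set D := ∫⁻ a, edist a x ∂ν
  have hD : D ≠ ⊤ := hν.lintegral_edist_ne_top x
  have hηD : ∫⁻ b, edist b x ∂ν.map T = 2 * D := by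
    rw [lintegral_map measurable_edist_left hT]
    simp_rw [hT_center]
    exact lintegral_const_mul _ measurable_edist_left
  have hνη : wassersteinDist 1 ν (ν.map T) = D := by
    refine le_antisymm ?_ ?_
    · simpa [Measure.map_id, hT_self] using wassersteinDist_one_map_le (ρ := ν) measurable_id hT
    · have := lintegral_edist_le_add_wassersteinDist_one (μ := ν) (ν := ν.map T) x
      rw [hηD, two_mul] at this
      exact (ENNReal.add_le_add_iff_left hD).1 this
  have hη : IsProbabilityMeasure (ν.map T) := Measure.isProbabilityMeasure_map hT.aemeasurable
  refine ⟨ν.map T, memWp_one_iff.2 ⟨hη, x, ?_⟩, ?_, ?_⟩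
  · exact hηD ▸ mul_ne_top ofNat_ne_top hD
  · rw [wassersteinDist_one_dirac_left, hνη]
  · rw [wassersteinDist_one_dirac_left, hηD, hνη, mul_comm,
      ENNReal.mul_div_cancel_right two_ne_zero ofNat_ne_top]

theorem exists_eq_dirac_of_forall_wassersteinDist_reflection [StrictConvexSpace ℝ E]
    (hdim : 2 ≤ Module.rank ℝ E) {μ : Measure E} (hμ : MemWp 1 μ)
    (h : ∀ ν : Measure E, MemWp 1 ν → ν ≠ μ →
      ∃ η : Measure E, MemWp 1 η ∧
        wassersteinDist 1 μ ν = wassersteinDist 1 ν η ∧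
        wassersteinDist 1 ν η = wassersteinDist 1 μ η / 2) :
    ∃ x, μ = Measure.dirac x := by
  have := hμ.1
  by_contra! hμ_ne
  have hline : ∀ y : E, ∃ c, ∀ᵐ a ∂μ, a ∈ line[ℝ, y, c] := by
    intro y
    obtain ⟨η, hη, h₁, h₂⟩ := h _ (memWp_dirac zero_le_one y) (hμ_ne y).symm
    have := hη.1
    obtain ⟨c, hcy, hc⟩ := exists_ne_ae_edist_eq_add_of_wassersteinDist_dirac hμ (hμ_ne y) h₁ h₂
    exact ⟨c, hc.mono fun a ha => mem_affineSpan_pair_of_edist_eq_add hcy.symm ha⟩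
  obtain ⟨c₁, h₁⟩ := hline 0
  obtain ⟨y, hy⟩ := exists_notMem_affineSpan_pair hdim (0 : E) c₁
  obtain ⟨c₂, h₂⟩ := hline y
  obtain ⟨x, hx⟩ := exists_eq_dirac_of_ae_mem (h₁.and h₂) (inter_affineSpan_pair_subsingleton hy)
  exact hμ_ne x hx

end NormedSpace

theorem dirac_iff_metric_reflection_W1_general
    {E : Type*} [NormedAddCommGroup E] [InnerProductSpace ℝ E]
    [MeasurableSpace E] [BorelSpace E]
    (hdim : 2 ≤ Module.rank ℝ E)
    (μ : Measure E) (hμ : MemWp 1 μ) :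
    (∃ x : E, μ = Measure.dirac x) ↔
      (∀ ν : Measure E, MemWp 1 ν → ν ≠ μ →
        ∃ η : Measure E, MemWp 1 η ∧
          wassersteinDist 1 μ ν = wassersteinDist 1 ν η ∧
          wassersteinDist 1 ν η = wassersteinDist 1 μ η / 2) := by
  refine ⟨?_, exists_eq_dirac_of_forall_wassersteinDist_reflection hdim hμ⟩
  rintro ⟨x, rfl⟩ ν hν -
  exact exists_wassersteinDist_one_reflection_dirac x hν

/-- for `dim E ≥ 2`, a measure `μ ∈ W₁(E)` is a Dirac measure iff every other
measure `ν` can be "reflected through" `ν` in the metric sense: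
`d(μ,ν) = d(ν,η) = d(μ,η)/2` for some `η`. -/
theorem dirac_iff_metric_reflection_W1
    {E : Type*} [NormedAddCommGroup E] [InnerProductSpace ℝ E] [CompleteSpace E]
    [SecondCountableTopology E] [MeasurableSpace E] [BorelSpace E]
    (hdim : 2 ≤ Module.rank ℝ E)
    (μ : Measure E) (hμ : MemWp 1 μ) :
    (∃ x : E, μ = Measure.dirac x) ↔
      (∀ ν : Measure E, MemWp 1 ν → ν ≠ μ →
        ∃ η : Measure E, MemWp 1 η ∧
          wassersteinDist 1 μ ν = wassersteinDist 1 ν η ∧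
          wassersteinDist 1 ν η = wassersteinDist 1 μ η / 2) :=
  dirac_iff_metric_reflection_W1_general hdim μ hμ
end
end

section
/- Let (X,ρ) be a complete separable metric space that satisfies the strict triangle inequality: ρ(x,y) < ρ(x,z) + ρ(z,y) whenever z ∉ {x,y}. Let D = {(x,x) : x ∈ X} denote the diagonal in X×X. If μ, ν ∈ W_1(X) and π is an optimal coupling of μ and ν (i.e. π is a coupling attaining the infimum defining d_{W_1}(μ,ν)), then the restriction of π to D equals the push-forward of μ∧ν under the map x ↦ (x,x). In particular, setting μ⁰ = (μ−ν)₊ and ν⁰ = (μ−ν)₋, one has d_{W_1}(μ,ν) = inf{ ∫_{X×X} ρ(x,y) dθ(x,y) : θ a positive measure on X×X with marginals μ⁰ and ν⁰ }. -/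
/-!
Suppose an optimal coupling `π` leaves part `τ ≠ 0` of the common mass `μ ⊓ ν` off the diagonal.
Then `τ` is both carried away from its location `y` by off-diagonal transport `y ↦ z` and brought
to `y` by off-diagonal transport `x ↦ y`. Gluing half of each along `y`, replacing `x ↦ y ↦ z` by
the shortcut `x ↦ z` and leaving the mass at `y` in place keeps the marginals, and by the strict
triangle inequality (`y ∉ {x, z}`) strictly lowers the finite cost. Hence the diagonal part of `π`
is `(μ ⊓ ν).map (x ↦ (x, x))`, which costs nothing, and adding or removing it identifies couplings
of `μ, ν` with couplings of `μ - μ ⊓ ν, ν - μ ⊓ ν` of the same cost.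
-/

open MeasureTheory ENNReal

noncomputable section

namespace MeasureTheory.Measure

variable {α β γ : Type*} [MeasurableSpace α] [MeasurableSpace β] [MeasurableSpace γ]

theorem exists_le_map_eq_of_le_map {ρ : Measure α} [IsFiniteMeasure ρ] {f : α → β}
    (hf : Measurable f) {a : Measure β} (ha : a ≤ ρ.map f) : ∃ ρ' ≤ ρ, ρ'.map f = a := by
  have := isFiniteMeasure_of_le _ ha
  refine ⟨ρ.withDensity fun x => a.rnDeriv (ρ.map f) (f x), ?_, ?_⟩
  · calc ρ.withDensity (fun x => a.rnDeriv (ρ.map f) (f x)) ≤ ρ.withDensity 1 :=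
          withDensity_mono (ae_of_ae_map hf.aemeasurable (rnDeriv_le_one_of_le ha))
      _ = ρ := withDensity_one
  · ext s hs
    rw [map_apply hf hs, withDensity_apply _ (hf hs),
      ← setLIntegral_map hs (measurable_rnDeriv _ _) hf, ← withDensity_apply _ hs,
      withDensity_rnDeriv_eq _ _ (absolutelyContinuous_of_le ha)]

theorem exists_add_le_of_le_fst_of_le_snd {ρ : Measure (α × β)} [IsFiniteMeasure ρ]
    {a : Measure α} {b : Measure β} (ha : a ≤ ρ.fst) (hb : b ≤ ρ.snd) :
    ∃ ρ₁ ρ₂ : Measure (α × β), ρ₁ + ρ₂ ≤ ρ ∧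
      ρ₁.fst = (2⁻¹ : ℝ≥0∞) • a ∧ ρ₂.snd = (2⁻¹ : ℝ≥0∞) • b := by
  obtain ⟨ρ₁, hρ₁, rfl⟩ := exists_le_map_eq_of_le_map measurable_fst ha
  obtain ⟨ρ₂, hρ₂, rfl⟩ := exists_le_map_eq_of_le_map measurable_snd hb
  refine ⟨(2⁻¹ : ℝ≥0∞) • ρ₁, (2⁻¹ : ℝ≥0∞) • ρ₂, ?_, Measure.map_smul .., Measure.map_smul ..⟩
  calc (2⁻¹ : ℝ≥0∞) • ρ₁ + (2⁻¹ : ℝ≥0∞) • ρ₂ ≤ (2⁻¹ : ℝ≥0∞) • ρ + (2⁻¹ : ℝ≥0∞) • ρ :=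
        add_le_add (smul_le_smul_left _ hρ₁) (smul_le_smul_left _ hρ₂)
    _ = ρ := by rw [← add_smul, ENNReal.inv_two_add_inv_two, one_smul]

open ProbabilityTheory in
theorem exists_fst_eq_and_map_eq_of_snd_eq_fst [StandardBorelSpace γ] [Nonempty γ]
    (ρ₁ : Measure (α × β)) (ρ₂ : Measure (β × γ)) [SFinite ρ₁] [IsFiniteMeasure ρ₂]
    (h : ρ₁.snd = ρ₂.fst) :
    ∃ κ : Measure ((α × β) × γ), κ.fst = ρ₁ ∧ κ.map (fun p => (p.1.2, p.2)) = ρ₂ := by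
  refine ⟨ρ₁ ⊗ₘ ρ₂.condKernel.prodMkLeft α, fst_compProd _ _, ?_⟩
  have hφ : Measurable fun p : (α × β) × γ => (p.1.2, p.2) := by fun_prop
  conv_rhs => rw [← ρ₂.disintegrate ρ₂.condKernel, ← h]
  ext s hs
  rw [map_apply hφ hs, compProd_apply (hφ hs), compProd_apply hs, snd,
    lintegral_map (Kernel.measurable_kernel_prodMk_left hs) measurable_snd]
  rfl

end MeasureTheory.Measure

open Set Measure

section Diagonal

variable {X : Type*} [MeasurableSpace X]

theorem fst_map_diag (η : Measure X) : (η.map fun x => (x, x)).fst = η := by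
  rw [fst, map_map measurable_fst (by fun_prop)]
  exact map_id

theorem snd_map_diag (η : Measure X) : (η.map fun x => (x, x)).snd = η := by
  rw [snd, map_map measurable_snd (by fun_prop)]
  exact map_id

variable [MeasurableEq X]

theorem snd_restrict_diagonal (ρ : Measure (X × X)) :
    (ρ.restrict (diagonal X)).snd = (ρ.restrict (diagonal X)).fst :=
  map_congr ((ae_restrict_mem measurableSet_diagonal).mono fun _ hz => hz.symm)

theorem restrict_diagonal_eq_map_fst (ρ : Measure (X × X)) :
    ρ.restrict (diagonal X) = (ρ.restrict (diagonal X)).fst.map fun x => (x, x) := by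
  rw [fst, map_map (by fun_prop) measurable_fst]
  conv_lhs => rw [← map_id (μ := ρ.restrict (diagonal X))]
  exact map_congr ((ae_restrict_mem measurableSet_diagonal).mono fun z hz => Prod.ext rfl hz.symm)

theorem ae_ne_of_le_restrict_compl_diagonal {ρ ρ' : Measure (X × X)}
    (h : ρ' ≤ ρ.restrict (diagonal X)ᶜ) : ∀ᵐ z ∂ρ', z.1 ≠ z.2 :=
  (absolutelyContinuous_of_le h).ae_le (ae_restrict_mem measurableSet_diagonal.compl)

theorem fst_restrict_diagonal_add_fst_restrict_compl (ρ : Measure (X × X)) :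
    (ρ.restrict (diagonal X)).fst + (ρ.restrict (diagonal X)ᶜ).fst = ρ.fst := by
  rw [← fst_add, restrict_add_restrict_compl measurableSet_diagonal]

theorem fst_restrict_diagonal_add_snd_restrict_compl (ρ : Measure (X × X)) :
    (ρ.restrict (diagonal X)).fst + (ρ.restrict (diagonal X)ᶜ).snd = ρ.snd := by
  rw [← snd_restrict_diagonal, ← snd_add, restrict_add_restrict_compl measurableSet_diagonal]

end Diagonal

section TransportCost

variable {X : Type*} [MeasurableSpace X] [PseudoEMetricSpace X]

def transportCost (ρ : Measure (X × X)) : ℝ≥0∞ :=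
  ∫⁻ z, edist z.1 z.2 ∂ρ

theorem transportCost_add (ρ ρ' : Measure (X × X)) :
    transportCost (ρ + ρ') = transportCost ρ + transportCost ρ' :=
  lintegral_add_measure _ _ _

theorem transportCost_mono {ρ ρ' : Measure (X × X)} (h : ρ ≤ ρ') :
    transportCost ρ ≤ transportCost ρ' :=
  lintegral_mono' h le_rfl

variable [OpensMeasurableSpace X]

theorem transportCost_le (ρ : Measure (X × X)) (x₀ x₁ : X) :
    transportCost ρ ≤
      ∫⁻ x, edist x x₀ ∂ρ.fst + (ρ univ * edist x₀ x₁ + ∫⁻ y, edist y x₁ ∂ρ.snd) :=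
  calc transportCost ρ ≤ ∫⁻ z, edist z.1 x₀ + (edist x₀ x₁ + edist z.2 x₁) ∂ρ := by
        refine lintegral_mono fun z => (edist_triangle _ x₀ _).trans ?_
        rw [edist_comm z.2]
        gcongr
        exact edist_triangle _ _ _
    _ = _ := by
        rw [lintegral_add_left (by fun_prop), lintegral_add_left measurable_const, lintegral_const,
          fst, snd, lintegral_map (by fun_prop) measurable_fst,
          lintegral_map (by fun_prop) measurable_snd, mul_comm]

variable [SecondCountableTopology X]

theorem transportCost_map_diag (η : Measure X) :
    transportCost (η.map fun x => (x, x)) = 0 := by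
  rw [transportCost, lintegral_map (by fun_prop) (by fun_prop)]
  simp

end TransportCost

theorem transportCost_ne_top_of_memWp {X : Type*} [PseudoMetricSpace X] [MeasurableSpace X]
    [OpensMeasurableSpace X] [SecondCountableTopology X] {μ ν : Measure X} (hμ : MemWp 1 μ)
    (hν : MemWp 1 ν) {ρ : Measure (X × X)} (h₁ : ρ.fst = μ) (h₂ : ρ.snd = ν) :
    transportCost ρ ≠ ∞ := by
  obtain ⟨hμ, x₀, hx₀⟩ := hμ
  obtain ⟨-, x₁, hx₁⟩ := hν
  simp only [ENNReal.rpow_one] at hx₀ hx₁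
  have hρ : ρ univ = 1 := by rw [← fst_univ, h₁, measure_univ]
  refine ne_top_of_le_ne_top ?_ (transportCost_le ρ x₀ x₁)
  rw [h₁, h₂, hρ, one_mul]
  exact add_ne_top.2 ⟨hx₀, add_ne_top.2 ⟨edist_ne_top _ _, hx₁⟩⟩

theorem transportCost_map_lt_of_strict_triangle {X : Type*} [MetricSpace X] [MeasurableSpace X]
    [OpensMeasurableSpace X] [SecondCountableTopology X]
    (hstrict : ∀ x y z : X, z ≠ x → z ≠ y → dist x y < dist x z + dist z y)
    {κ : Measure ((X × X) × X)} (hκ : κ ≠ 0)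
    (hfin : transportCost κ.fst + transportCost (κ.map fun p => (p.1.2, p.2)) ≠ ∞)
    (hne : ∀ᵐ p ∂κ, p.1.2 ≠ p.1.1 ∧ p.1.2 ≠ p.2) :
    transportCost (κ.map fun p => (p.1.1, p.2)) <
      transportCost κ.fst + transportCost (κ.map fun p => (p.1.2, p.2)) := by
  have hlt : ∀ᵐ p ∂κ, edist p.1.1 p.2 < edist p.1.1 p.1.2 + edist p.1.2 p.2 := by
    filter_upwards [hne] with p hp
    rw [edist_dist, edist_dist, edist_dist, ← ofReal_add dist_nonneg dist_nonneg]
    exact (ofReal_lt_ofReal_iff_of_nonneg dist_nonneg).2 (hstrict _ _ _ hp.1 hp.2)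
  have hsum : transportCost κ.fst + transportCost (κ.map fun p => (p.1.2, p.2)) =
      ∫⁻ p, edist p.1.1 p.1.2 + edist p.1.2 p.2 ∂κ := by
    rw [transportCost, transportCost, fst, lintegral_map (by fun_prop) measurable_fst,
      lintegral_map (by fun_prop) (by fun_prop), lintegral_add_left (by fun_prop)]
  rw [hsum] at hfin ⊢
  rw [transportCost, lintegral_map (by fun_prop) (by fun_prop)]
  exact lintegral_strict_mono hκ (by fun_prop)
    (ne_top_of_le_ne_top hfin (lintegral_mono_ae (hlt.mono fun _ => le_of_lt))) hlt

section Optimality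

variable {X : Type*} [MetricSpace X] [CompleteSpace X] [SecondCountableTopology X]
  [MeasurableSpace X] [BorelSpace X]

theorem exists_transportCost_lt_of_le_fst_of_le_snd
    (hstrict : ∀ x y z : X, z ≠ x → z ≠ y → dist x y < dist x z + dist z y)
    {ρ : Measure (X × X)} [IsFiniteMeasure ρ] (hρ : transportCost ρ ≠ ∞)
    {τ : Measure X} (hτ : τ ≠ 0) (h₁ : τ ≤ (ρ.restrict (diagonal X)ᶜ).fst)
    (h₂ : τ ≤ (ρ.restrict (diagonal X)ᶜ).snd) :
    ∃ ρ' : Measure (X × X), ρ'.fst = ρ.fst ∧ ρ'.snd = ρ.snd ∧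
      transportCost ρ' < transportCost ρ := by
  have : NeZero τ := ⟨hτ⟩
  have := nonempty_of_neZero τ
  obtain ⟨ρ₁, ρ₂, hle, hρ₁, hρ₂⟩ := exists_add_le_of_le_fst_of_le_snd h₁ h₂
  have hle₁ : ρ₁ ≤ ρ.restrict (diagonal X)ᶜ := (Measure.le_add_right le_rfl).trans hle
  have hle₂ : ρ₂ ≤ ρ.restrict (diagonal X)ᶜ := (Measure.le_add_left le_rfl).trans hle
  have := isFiniteMeasure_of_le _ (hle₁.trans restrict_le_self)
  have := isFiniteMeasure_of_le _ (hle₂.trans restrict_le_self)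
  -- `κ` runs `x ↦ y` along `ρ₂`, then `y ↦ z` along `ρ₁`; `Q` is the shortcut `x ↦ z`.
  obtain ⟨κ, hκ₂, hκ₁⟩ := exists_fst_eq_and_map_eq_of_snd_eq_fst ρ₂ ρ₁ (hρ₂.trans hρ₁.symm)
  set θ := ρ - (ρ₁ + ρ₂)
  have hθ : θ + (ρ₁ + ρ₂) = ρ := sub_add_cancel_of_le (hle.trans restrict_le_self)
  set Q := κ.map fun p => (p.1.1, p.2)
  have hQ₁ : Q.fst = ρ₂.fst := by
    rw [← hκ₂, fst, fst, fst, map_map measurable_fst (by fun_prop),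
      map_map measurable_fst measurable_fst]
    rfl
  have hQ₂ : Q.snd = ρ₁.snd := by
    rw [← hκ₁, snd, snd, map_map measurable_snd (by fun_prop),
      map_map measurable_snd (by fun_prop)]
    rfl
  refine ⟨θ + (Q + ((2⁻¹ : ℝ≥0∞) • τ).map fun x => (x, x)), ?_, ?_, ?_⟩
  · rw [← hθ, fst_add, fst_add, fst_add, fst_add, hQ₁, fst_map_diag, ← hρ₁, add_comm ρ₁.fst]
  · rw [← hθ, snd_add, snd_add, snd_add, snd_add, hQ₂, snd_map_diag, ← hρ₂]
  have hκ : κ ≠ 0 := by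
    rintro rfl
    rw [← hκ₁, Measure.map_zero, fst_zero, eq_comm, ennreal_smul_eq_zero] at hρ₁
    exact hτ (hρ₁.resolve_left (by norm_num))
  have hne : ∀ᵐ p ∂κ, p.1.2 ≠ p.1.1 ∧ p.1.2 ≠ p.2 := by
    have h₂ : ∀ᵐ z ∂κ.fst, z.1 ≠ z.2 := hκ₂ ▸ ae_ne_of_le_restrict_compl_diagonal hle₂
    have h₁ : ∀ᵐ z ∂(κ.map fun p => (p.1.2, p.2)), z.1 ≠ z.2 :=
      hκ₁ ▸ ae_ne_of_le_restrict_compl_diagonal hle₁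
    filter_upwards [ae_of_ae_map measurable_fst.aemeasurable h₂,
      ae_of_ae_map (by fun_prop) h₁] with p hp₂ hp₁
    exact ⟨hp₂.symm, hp₁⟩
  have hfin : transportCost ρ₂ + transportCost ρ₁ ≠ ∞ := by
    rw [← transportCost_add, add_comm]
    exact ne_top_of_le_ne_top hρ (transportCost_mono (hle.trans restrict_le_self))
  have hshort : transportCost Q < transportCost ρ₂ + transportCost ρ₁ := by
    rw [← hκ₂, ← hκ₁] at hfin ⊢
    exact transportCost_map_lt_of_strict_triangle hstrict hκ hfin hne
  rw [← hθ, transportCost_add, transportCost_add, transportCost_add, transportCost_add,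
    transportCost_map_diag, add_zero, add_comm (transportCost ρ₁)]
  exact ENNReal.add_lt_add_left (ne_top_of_le_ne_top hρ (transportCost_mono sub_le)) hshort

theorem fst_restrict_diagonal_eq_inf_of_optimal
    (hstrict : ∀ x y z : X, z ≠ x → z ≠ y → dist x y < dist x z + dist z y)
    {π : Measure (X × X)} [IsFiniteMeasure π] (hπ : transportCost π ≠ ∞)
    (hopt : ∀ π' : Measure (X × X), π'.fst = π.fst → π'.snd = π.snd →
      transportCost π ≤ transportCost π') :
    (π.restrict (diagonal X)).fst = π.fst ⊓ π.snd := by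
  set η := (π.restrict (diagonal X)).fst
  have hfst := fst_restrict_diagonal_add_fst_restrict_compl π
  have hsnd := fst_restrict_diagonal_add_snd_restrict_compl π
  have hη : η ≤ π.fst ⊓ π.snd :=
    le_inf (hfst ▸ Measure.le_add_right le_rfl) (hsnd ▸ Measure.le_add_right le_rfl)
  have := isFiniteMeasure_of_le _ (hη.trans inf_le_left)
  by_contra hne
  have hτ : π.fst ⊓ π.snd - η ≠ 0 := fun h => hne <| by
    rw [← sub_add_cancel_of_le hη, h, zero_add]
  obtain ⟨π', h₁, h₂, hlt⟩ := exists_transportCost_lt_of_le_fst_of_le_snd hstrict hπ hτ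
    (sub_le_of_le_add (inf_le_left.trans (hfst.symm.trans (add_comm _ _)).le))
    (sub_le_of_le_add (inf_le_right.trans (hsnd.symm.trans (add_comm _ _)).le))
  exact hlt.not_ge (hopt π' h₁ h₂)

end Optimality

theorem transportCost_eq_iInf_sub_inf {X : Type*} [PseudoEMetricSpace X] [MeasurableSpace X]
    [OpensMeasurableSpace X] [SecondCountableTopology X] [MeasurableEq X]
    {μ ν : Measure X} [IsFiniteMeasure (μ ⊓ ν)] {π : Measure (X × X)}
    (hπ₁ : π.fst = μ) (hπ₂ : π.snd = ν)
    (hopt : transportCost π =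
      ⨅ θ ∈ {θ : Measure (X × X) | θ.fst = μ ∧ θ.snd = ν}, transportCost θ)
    (hdiag : π.restrict (diagonal X) = (μ ⊓ ν).map fun x => (x, x)) :
    transportCost π = ⨅ θ ∈ {θ : Measure (X × X) | θ.fst = μ - μ ⊓ ν ∧ θ.snd = ν - μ ⊓ ν},
      transportCost θ := by
  have hη : (π.restrict (diagonal X)).fst = μ ⊓ ν := by rw [hdiag, fst_map_diag]
  have hfst := fst_restrict_diagonal_add_fst_restrict_compl π
  have hsnd := fst_restrict_diagonal_add_snd_restrict_compl π
  rw [hη, hπ₁, add_comm] at hfst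
  rw [hη, hπ₂, add_comm] at hsnd
  refine le_antisymm (le_iInf₂ fun θ hθ => ?_) ?_
  · calc transportCost π ≤ transportCost (θ + (μ ⊓ ν).map fun x => (x, x)) :=
          hopt.trans_le <| iInf₂_le _
            ⟨by rw [fst_add, hθ.1, fst_map_diag, sub_add_cancel_of_le inf_le_left],
              by rw [snd_add, hθ.2, snd_map_diag, sub_add_cancel_of_le inf_le_right]⟩
      _ = transportCost θ := by rw [transportCost_add, transportCost_map_diag, add_zero]
  · calc _ ≤ transportCost (π.restrict (diagonal X)ᶜ) :=
          iInf₂_le _ ⟨Measure.add_sub_cancel.symm.trans (congrArg (· - μ ⊓ ν) hfst),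
            Measure.add_sub_cancel.symm.trans (congrArg (· - μ ⊓ ν) hsnd)⟩
      _ = transportCost π := by
          conv_rhs => rw [← restrict_add_restrict_compl (μ := π) measurableSet_diagonal]
          rw [transportCost_add, hdiag, transportCost_map_diag, zero_add]

/-- under the strict triangle inequality, any optimal coupling restricted to
the diagonal is the push-forward of `μ ⊓ ν` under `x ↦ (x,x)`; in particular the
`W₁`-distance equals the optimal transport cost between `μ⁰ = μ - μ ⊓ ν` and
`ν⁰ = ν - μ ⊓ ν`. -/
theorem optimal_coupling_fixes_common_mass
    {X : Type*} [MetricSpace X] [CompleteSpace X] [SecondCountableTopology X]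
    [MeasurableSpace X] [BorelSpace X]
    (hstrict : ∀ x y z : X, z ≠ x → z ≠ y → dist x y < dist x z + dist z y)
    (μ ν : Measure X) (hμ : MemWp 1 μ) (hν : MemWp 1 ν)
    (π : Measure (X × X))
    (hπ : π.map Prod.fst = μ ∧ π.map Prod.snd = ν)
    (hopt : ∫⁻ z, edist z.1 z.2 ∂π
      = ⨅ θ ∈ {θ : Measure (X × X) | θ.map Prod.fst = μ ∧ θ.map Prod.snd = ν},
          ∫⁻ z, edist z.1 z.2 ∂θ) :
    π.restrict (Set.diagonal X) = (μ ⊓ ν).map (fun x => (x, x)) ∧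
    wassersteinDist 1 μ ν
      = ⨅ θ ∈ {θ : Measure (X × X) |
            θ.map Prod.fst = μ - μ ⊓ ν ∧ θ.map Prod.snd = ν - μ ⊓ ν},
          ∫⁻ z, edist z.1 z.2 ∂θ := by
  obtain ⟨hπ₁, hπ₂⟩ : π.fst = μ ∧ π.snd = ν := hπ
  have := hμ.1
  have : IsFiniteMeasure π := ⟨by rw [← fst_univ, hπ₁]; exact measure_lt_top _ _⟩
  have := isFiniteMeasure_of_le _ (inf_le_left : μ ⊓ ν ≤ μ)
  have hη := fst_restrict_diagonal_eq_inf_of_optimal hstrict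
    (transportCost_ne_top_of_memWp hμ hν hπ₁ hπ₂)
    fun π' h₁ h₂ => hopt.trans_le (iInf₂_le π' ⟨h₁.trans hπ₁, h₂.trans hπ₂⟩)
  rw [hπ₁, hπ₂] at hη
  have hdiag : π.restrict (diagonal X) = (μ ⊓ ν).map fun x => (x, x) :=
    hη ▸ restrict_diagonal_eq_map_fst π
  refine ⟨hdiag, ?_⟩
  simp only [wassersteinDist, inv_one, min_self, ENNReal.rpow_one]
  exact hopt.symm.trans (transportCost_eq_iInf_sub_inf hπ₁ hπ₂ hopt hdiag)

end
end
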